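/- Carleman identity: Let k ≥ 0, Ω ⊆ ℝ^(1+n) open, ℓ, w ∈ C³(Ω), σ ∈ C¹(Ω). Define v = e^ℓ w, a = σ − Δℓ, q = k² + a + |∇ℓ|², b = −σv − 2⟨∇v, ∇ℓ⟩, c = (|∇v|² − qv²)∇ℓ. Then e^{2ℓ}(Δw + k²w)²/2 = (Δv + qv)²/2 + b²/2 + a|∇v|² + 2D²ℓ(∇v,∇v) + (−a|∇ℓ|² + 2D²ℓ(∇ℓ,∇ℓ))v² − k²av² + div(b∇v + c) + R, where R = ⟨∇σ, ∇v⟩v + (div(a∇ℓ) − aσ)v². -/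

import Mathlib

/-!
Write `P = Δv + qv`. Conjugating by `e^ℓ` gives `e^ℓ (Δw + k²w) = P + b`, so the left-hand side is
`(P + b)²/2 = P²/2 + b²/2 + P b`, and everything reduces to the cross term `P b`. That term is
obtained by expanding `div(b ∇v) = ⟨∇b, ∇v⟩ + b Δv` and `div c = ⟨∇φ, ∇ℓ⟩ + φ Δℓ` with
`φ = |∇v|² - q v²` by the product rule; the two third-order terms `D²v(∇v, ∇ℓ)` coming from `∇b` and
`∇φ` cancel by symmetry of `D²v`.
-/

open scoped RealInnerProductSpace

noncomputable def lap {n : ℕ} (f : EuclideanSpace ℝ (Fin (n+1)) → ℝ) (x : EuclideanSpace ℝ (Fin (n+1))) : ℝ :=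
  ∑ i, fderiv ℝ (fun y => fderiv ℝ f y (EuclideanSpace.single i 1)) x (EuclideanSpace.single i 1)

noncomputable def dvg {n : ℕ} (F : EuclideanSpace ℝ (Fin (n+1)) → EuclideanSpace ℝ (Fin (n+1))) (x : EuclideanSpace ℝ (Fin (n+1))) : ℝ :=
  ∑ i, fderiv ℝ (fun y => F y i) x (EuclideanSpace.single i 1)

noncomputable def hess {n : ℕ} (f : EuclideanSpace ℝ (Fin (n+1)) → ℝ) (x X Y : EuclideanSpace ℝ (Fin (n+1))) : ℝ :=
  fderiv ℝ (fun y => ⟪gradient f y, Y⟫) x X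

section

variable {n : ℕ}

local notation "E" => EuclideanSpace ℝ (Fin (n+1))

lemma gradient_apply_eq_fderiv (f : E → ℝ) (y : E) (i : Fin (n+1)) :
    gradient f y i = fderiv ℝ f y (EuclideanSpace.single i 1) := by
  rw [← inner_gradient_left, EuclideanSpace.inner_single_right]
  simp

lemma ContinuousLinearMap.apply_eq_sum_single (L : E →L[ℝ] ℝ) (z : E) :
    L z = ∑ i, z i * L (EuclideanSpace.single i 1) := by
  conv_lhs => rw [← (EuclideanSpace.basisFun (Fin (n+1)) ℝ).sum_repr z]
  simp

lemma lap_eq_dvg_gradient (f : E → ℝ) : lap f = dvg (gradient f) := by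
  funext x
  simp only [lap, dvg, gradient_apply_eq_fderiv]

lemma Filter.EventuallyEq.dvg_eq {F G : E → E} {x : E} (h : F =ᶠ[nhds x] G) :
    dvg F x = dvg G x := by
  unfold dvg
  congr! 2 with i
  exact (h.fun_comp fun z => z i).fderiv_eq

lemma ContDiffAt.gradient {m : WithTop ℕ∞} {f : E → ℝ} {x : E} (hf : ContDiffAt ℝ (m + 1) f x) :
    ContDiffAt ℝ m (gradient f) x := by
  rw [contDiffAt_piLp]
  intro i
  simp only [gradient_apply_eq_fderiv]
  exact (hf.fderiv_right le_rfl).clm_apply contDiffAt_const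

lemma ContDiffAt.dvg {m : WithTop ℕ∞} {F : E → E} {x : E} (hF : ContDiffAt ℝ (m + 1) F x) :
    ContDiffAt ℝ m (dvg F) x := by
  unfold _root_.dvg
  rw [contDiffAt_piLp] at hF
  exact ContDiffAt.sum fun i _ => ((hF i).fderiv_right le_rfl).clm_apply contDiffAt_const

lemma ContDiffAt.lap {m : WithTop ℕ∞} {f : E → ℝ} {x : E} (hf : ContDiffAt ℝ (m + 2) f x) :
    ContDiffAt ℝ m (lap f) x := by
  rw [lap_eq_dvg_gradient]
  exact ContDiffAt.dvg (ContDiffAt.gradient (by rwa [add_assoc, one_add_one_eq_two]))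

lemma dvg_add {F G : E → E} {x : E} (hF : DifferentiableAt ℝ F x) (hG : DifferentiableAt ℝ G x) :
    dvg (fun y => F y + G y) x = dvg F x + dvg G x := by
  rw [differentiableAt_piLp] at hF hG
  simp only [dvg, ← Finset.sum_add_distrib, PiLp.add_apply]
  congr! 1 with i
  rw [fderiv_fun_add (hF i) (hG i)]
  rfl

lemma dvg_smul {φ : E → ℝ} {F : E → E} {x : E} (hφ : DifferentiableAt ℝ φ x)
    (hF : DifferentiableAt ℝ F x) :
    dvg (fun y => φ y • F y) x = fderiv ℝ φ x (F x) + φ x * dvg F x := by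
  rw [differentiableAt_piLp] at hF
  simp only [dvg, PiLp.smul_apply, smul_eq_mul, (fderiv ℝ φ x).apply_eq_sum_single (F x),
    Finset.mul_sum, ← Finset.sum_add_distrib]
  congr! 1 with i
  rw [fderiv_fun_mul hφ (hF i)]
  simp only [add_apply, smul_apply, smul_eq_mul]
  ring

lemma gradient_fun_mul {f g : E → ℝ} {x : E} (hf : DifferentiableAt ℝ f x)
    (hg : DifferentiableAt ℝ g x) :
    gradient (fun y => f y * g y) x = f x • gradient g x + g x • gradient f x := by
  refine ext_inner_right ℝ fun z => ?_
  simp only [inner_gradient_left, fderiv_fun_mul hf hg, inner_add_left, real_inner_smul_left]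
  simp

lemma gradient_exp {f : E → ℝ} {x : E} (hf : DifferentiableAt ℝ f x) :
    gradient (fun y => Real.exp (f y)) x = Real.exp (f x) • gradient f x := by
  refine ext_inner_right ℝ fun z => ?_
  simp only [inner_gradient_left, fderiv_exp hf, real_inner_smul_left]
  simp

lemma lap_fun_mul {f g : E → ℝ} {x : E} (hf : ContDiffAt ℝ 2 f x) (hg : ContDiffAt ℝ 2 g x) :
    lap (fun y => f y * g y) x
      = f x * lap g x + 2 * ⟪gradient f x, gradient g x⟫ + g x * lap f x := by
  have hgrad : gradient (fun y => f y * g y) =ᶠ[nhds x]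
      fun y => f y • gradient g y + g y • gradient f y := by
    filter_upwards [hf.eventually (by simp), hg.eventually (by simp)] with y hfy hgy
    exact gradient_fun_mul (hfy.differentiableAt (by simp)) (hgy.differentiableAt (by simp))
  have hf' := hf.differentiableAt (by simp)
  have hg' := hg.differentiableAt (by simp)
  have hf'' := (ContDiffAt.gradient (m := 1) hf).differentiableAt (by simp)
  have hg'' := (ContDiffAt.gradient (m := 1) hg).differentiableAt (by simp)
  rw [lap_eq_dvg_gradient, hgrad.dvg_eq, dvg_add (hf'.fun_smul hg'') (hg'.fun_smul hf''),
    dvg_smul hf' hg'', dvg_smul hg' hf'', ← inner_gradient_left, ← inner_gradient_left,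
    real_inner_comm (gradient g x), ← lap_eq_dvg_gradient, ← lap_eq_dvg_gradient]
  ring

lemma lap_exp {f : E → ℝ} {x : E} (hf : ContDiffAt ℝ 2 f x) :
    lap (fun y => Real.exp (f y)) x = Real.exp (f x) * (‖gradient f x‖ ^ 2 + lap f x) := by
  have hgrad : gradient (fun y => Real.exp (f y)) =ᶠ[nhds x]
      fun y => Real.exp (f y) • gradient f y := by
    filter_upwards [hf.eventually (by simp)] with y hfy
    exact gradient_exp (hfy.differentiableAt (by simp))
  have hf' := hf.differentiableAt (by simp)
  have hf'' := (ContDiffAt.gradient (m := 1) hf).differentiableAt (by simp)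
  rw [lap_eq_dvg_gradient, hgrad.dvg_eq, dvg_smul hf'.exp hf'', ← inner_gradient_left,
    gradient_exp hf', real_inner_smul_left, real_inner_self_eq_norm_sq, ← lap_eq_dvg_gradient]
  ring

lemma exp_mul_lap_eq {ℓ w : E → ℝ} {x : E} (hℓ : ContDiffAt ℝ 2 ℓ x) (hw : ContDiffAt ℝ 2 w x) :
    Real.exp (ℓ x) * lap w x
      = lap (fun y => Real.exp (ℓ y) * w y) x
        - 2 * ⟪gradient (fun y => Real.exp (ℓ y) * w y) x, gradient ℓ x⟫
        + (‖gradient ℓ x‖ ^ 2 - lap ℓ x) * (Real.exp (ℓ x) * w x) := by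
  have hℓ' := hℓ.differentiableAt (by simp)
  rw [lap_fun_mul hℓ.exp hw, lap_exp hℓ, gradient_fun_mul hℓ'.exp (hw.differentiableAt (by simp)),
    gradient_exp hℓ']
  simp only [inner_add_left, real_inner_smul_left, real_inner_smul_right,
    real_inner_self_eq_norm_sq, real_inner_comm (gradient w x)]
  ring

lemma hess_eq_inner_fderiv_gradient {f : E → ℝ} {x : E} (hf : DifferentiableAt ℝ (gradient f) x)
    (X Y : E) : hess f x X Y = ⟪fderiv ℝ (gradient f) x X, Y⟫ := by
  rw [hess, fderiv_inner_apply ℝ hf (differentiableAt_const Y)]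
  simp

lemma fderiv_inner_gradient {f g : E → ℝ} {x : E} (hf : DifferentiableAt ℝ (gradient f) x)
    (hg : DifferentiableAt ℝ (gradient g) x) (X : E) :
    fderiv ℝ (fun y => ⟪gradient f y, gradient g y⟫) x X
      = hess f x X (gradient g x) + hess g x X (gradient f x) := by
  rw [fderiv_inner_apply ℝ hf hg, hess_eq_inner_fderiv_gradient hf,
    hess_eq_inner_fderiv_gradient hg, real_inner_comm (gradient f x), add_comm]

lemma hess_symm {f : E → ℝ} {x : E} (hf : ContDiffAt ℝ 2 f x) (X Y : E) :
    hess f x X Y = hess f x Y X := by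
  have hf' : DifferentiableAt ℝ (fderiv ℝ f) x :=
    (hf.fderiv_right (m := 1) le_rfl).differentiableAt (by simp)
  have hess_eq : ∀ X Y, hess f x X Y = fderiv ℝ (fderiv ℝ f) x X Y := fun X Y => by
    simp only [hess, inner_gradient_left]
    rw [fderiv_clm_apply hf' (differentiableAt_const Y)]
    simp
  rw [hess_eq, hess_eq]
  exact hf.isSymmSndFDerivAt (by simp) X Y

theorem carleman_cross_term {ℓ σ v : E → ℝ} {x : E} (hℓ : ContDiffAt ℝ 3 ℓ x)
    (hv : ContDiffAt ℝ 2 v x) (hσ : DifferentiableAt ℝ σ x) (k : ℝ) (a q b : E → ℝ) (c : E → E)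
    (R : E → ℝ)
    (ha : a = fun x => σ x - lap ℓ x)
    (hq : q = fun x => k^2 + a x + ‖gradient ℓ x‖^2)
    (hb : b = fun x => -(σ x * v x) - 2 * ⟪gradient v x, gradient ℓ x⟫)
    (hc : c = fun x => (‖gradient v x‖^2 - q x * (v x)^2) • gradient ℓ x)
    (hR : R = fun x => ⟪gradient σ x, gradient v x⟫ * v x
        + (dvg (fun y => a y • gradient ℓ y) x - a x * σ x) * (v x)^2) :
    (lap v x + q x * v x) * b x
      = a x * ‖gradient v x‖^2 + 2 * hess ℓ x (gradient v x) (gradient v x)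
        + (-(a x) * ‖gradient ℓ x‖^2 + 2 * hess ℓ x (gradient ℓ x) (gradient ℓ x)) * (v x)^2
        - k^2 * a x * (v x)^2
        + dvg (fun y => b y • gradient v y + c y) x + R x := by
  have hv₁ : DifferentiableAt ℝ v x := hv.differentiableAt (by simp)
  have hgℓ : DifferentiableAt ℝ (gradient ℓ) x :=
    (ContDiffAt.gradient (m := 2) hℓ).differentiableAt (by simp)
  have hgv : DifferentiableAt ℝ (gradient v) x :=
    (ContDiffAt.gradient (m := 1) hv).differentiableAt (by simp)
  have hda : DifferentiableAt ℝ a x :=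
    ha ▸ hσ.fun_sub ((ContDiffAt.lap (m := 1) hℓ).differentiableAt one_ne_zero)
  have hdq : DifferentiableAt ℝ q x := by
    rw [hq]
    simp only [← real_inner_self_eq_norm_sq]
    exact ((differentiableAt_const _).fun_add hda).fun_add (hgℓ.inner ℝ hgℓ)
  have hdb : DifferentiableAt ℝ b x :=
    hb ▸ (hσ.fun_mul hv₁).fun_neg.fun_sub ((hgv.inner ℝ hgℓ).const_mul 2)
  set φ : E → ℝ := fun y => ‖gradient v y‖ ^ 2 - q y * v y ^ 2 with hφ
  have hdφ : DifferentiableAt ℝ φ x := by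
    rw [hφ]
    simp only [← real_inner_self_eq_norm_sq]
    exact (hgv.inner ℝ hgv).fun_sub (hdq.fun_mul (hv₁.fun_pow 2))
  have hDq : fderiv ℝ q x (gradient ℓ x)
      = fderiv ℝ a x (gradient ℓ x) + 2 * hess ℓ x (gradient ℓ x) (gradient ℓ x) := by
    rw [hq]
    simp only [← real_inner_self_eq_norm_sq]
    rw [fderiv_fun_add ((differentiableAt_const _).fun_add hda) (hgℓ.inner ℝ hgℓ),
      fderiv_fun_add (differentiableAt_const _) hda]
    simp only [add_apply, fderiv_inner_gradient hgℓ hgℓ, fderiv_fun_const, Pi.zero_apply,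
      zero_add]
    ring
  have hDb : fderiv ℝ b x (gradient v x)
      = -(⟪gradient σ x, gradient v x⟫ * v x + σ x * ‖gradient v x‖ ^ 2)
      - 2 * (hess v x (gradient v x) (gradient ℓ x) + hess ℓ x (gradient v x) (gradient v x)) := by
    rw [hb, fderiv_fun_sub (hσ.fun_mul hv₁).fun_neg ((hgv.inner ℝ hgℓ).const_mul 2), fderiv_fun_neg,
      fderiv_fun_mul hσ hv₁, fderiv_const_mul (hgv.inner ℝ hgℓ)]
    simp only [sub_apply, neg_apply, add_apply, smul_apply, smul_eq_mul,
      fderiv_inner_gradient hgv hgℓ, ← inner_gradient_left, real_inner_self_eq_norm_sq]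
    ring
  have hDφ : fderiv ℝ φ x (gradient ℓ x) = 2 * hess v x (gradient ℓ x) (gradient v x)
      - (fderiv ℝ q x (gradient ℓ x) * v x ^ 2
        + q x * (2 * v x * ⟪gradient v x, gradient ℓ x⟫)) := by
    simp only [hφ, ← real_inner_self_eq_norm_sq]
    rw [fderiv_fun_sub (hgv.inner ℝ hgv) (hdq.fun_mul (hv₁.fun_pow 2)),
      fderiv_fun_mul hdq (hv₁.fun_pow 2), fderiv_fun_pow 2 hv₁]
    simp only [sub_apply, add_apply, smul_apply, smul_eq_mul, fderiv_inner_gradient hgv hgv,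
      ← inner_gradient_left]
    ring
  have hdiv : dvg (fun y => b y • gradient v y + c y) x
      = fderiv ℝ b x (gradient v x) + b x * lap v x
        + (fderiv ℝ φ x (gradient ℓ x) + φ x * lap ℓ x) := by
    rw [hc, dvg_add (hdb.fun_smul hgv) (hdφ.fun_smul hgℓ), dvg_smul hdb hgv, dvg_smul hdφ hgℓ,
      lap_eq_dvg_gradient, lap_eq_dvg_gradient]
  have hdivR : dvg (fun y => a y • gradient ℓ y) x
      = fderiv ℝ a x (gradient ℓ x) + a x * lap ℓ x := by
    rw [dvg_smul hda hgℓ, lap_eq_dvg_gradient]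
  rw [hdiv, hDb, hDφ, hDq, hR]
  dsimp only
  rw [hdivR, hess_symm hv (gradient v x)]
  simp only [hφ, hq, ha, hb]
  ring

end

theorem carleman_identity_general {n : ℕ} {Ω : Set (EuclideanSpace ℝ (Fin (n+1)))}
    (hΩ : IsOpen Ω) (ℓ w σ : EuclideanSpace ℝ (Fin (n+1)) → ℝ)
    (hℓ : ContDiffOn ℝ 3 ℓ Ω) (hw : ContDiffOn ℝ 3 w Ω) (hσ : ContDiffOn ℝ 1 σ Ω)
    (k : ℝ)
    (v a q : EuclideanSpace ℝ (Fin (n+1)) → ℝ)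
    (b : EuclideanSpace ℝ (Fin (n+1)) → ℝ)
    (c : EuclideanSpace ℝ (Fin (n+1)) → EuclideanSpace ℝ (Fin (n+1)))
    (R : EuclideanSpace ℝ (Fin (n+1)) → ℝ)
    (hv : v = fun x => Real.exp (ℓ x) * w x)
    (ha : a = fun x => σ x - lap ℓ x)
    (hq : q = fun x => k^2 + a x + ‖gradient ℓ x‖^2)
    (hb : b = fun x => -(σ x * v x) - 2 * ⟪gradient v x, gradient ℓ x⟫)
    (hc : c = fun x => (‖gradient v x‖^2 - q x * (v x)^2) • gradient ℓ x)
    (hR : R = fun x => ⟪gradient σ x, gradient v x⟫ * v x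
        + (dvg (fun y => a y • gradient ℓ y) x - a x * σ x) * (v x)^2) :
    ∀ x ∈ Ω,
      Real.exp (2 * ℓ x) * (lap w x + k^2 * w x)^2 / 2
        = (lap v x + q x * v x)^2 / 2 + (b x)^2 / 2
          + a x * ‖gradient v x‖^2 + 2 * hess ℓ x (gradient v x) (gradient v x)
          + (-(a x) * ‖gradient ℓ x‖^2 + 2 * hess ℓ x (gradient ℓ x) (gradient ℓ x)) * (v x)^2
          - k^2 * a x * (v x)^2
          + dvg (fun y => b y • gradient v y + c y) x + R x := by
  intro x hx
  have hmem := hΩ.mem_nhds hx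
  have hℓx : ContDiffAt ℝ 3 ℓ x := hℓ.contDiffAt hmem
  have hwx : ContDiffAt ℝ 3 w x := hw.contDiffAt hmem
  have hvx : ContDiffAt ℝ 2 v x := hv ▸ (hℓx.exp.mul hwx).of_le (by norm_num)
  have hconj : Real.exp (ℓ x) * (lap w x + k^2 * w x) = lap v x + q x * v x + b x := by
    rw [mul_add, exp_mul_lap_eq (hℓx.of_le (by norm_num)) (hwx.of_le (by norm_num)), ← hv]
    simp only [hq, ha, hb, hv]
    ring
  have hcross := carleman_cross_term hℓx hvx
    ((hσ.contDiffAt hmem).differentiableAt one_ne_zero) k a q b c R ha hq hb hc hR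
  have hexp : Real.exp (2 * ℓ x) = Real.exp (ℓ x) ^ 2 := by rw [sq, ← Real.exp_add, two_mul]
  rw [hexp]
  linear_combination
    (Real.exp (ℓ x) * (lap w x + k^2 * w x) + lap v x + q x * v x + b x) / 2 * hconj + hcross

theorem carleman_identity {n : ℕ} {Ω : Set (EuclideanSpace ℝ (Fin (n+1)))}
    (hΩ : IsOpen Ω) (ℓ w σ : EuclideanSpace ℝ (Fin (n+1)) → ℝ)
    (hℓ : ContDiffOn ℝ 3 ℓ Ω) (hw : ContDiffOn ℝ 3 w Ω) (hσ : ContDiffOn ℝ 1 σ Ω)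
    (k : ℝ) (hk : 0 ≤ k)
    (v a q : EuclideanSpace ℝ (Fin (n+1)) → ℝ)
    (b : EuclideanSpace ℝ (Fin (n+1)) → ℝ)
    (c : EuclideanSpace ℝ (Fin (n+1)) → EuclideanSpace ℝ (Fin (n+1)))
    (R : EuclideanSpace ℝ (Fin (n+1)) → ℝ)
    (hv : v = fun x => Real.exp (ℓ x) * w x)
    (ha : a = fun x => σ x - lap ℓ x)
    (hq : q = fun x => k^2 + a x + ‖gradient ℓ x‖^2)
    (hb : b = fun x => -(σ x * v x) - 2 * ⟪gradient v x, gradient ℓ x⟫)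
    (hc : c = fun x => (‖gradient v x‖^2 - q x * (v x)^2) • gradient ℓ x)
    (hR : R = fun x => ⟪gradient σ x, gradient v x⟫ * v x
        + (dvg (fun y => a y • gradient ℓ y) x - a x * σ x) * (v x)^2) :
    ∀ x ∈ Ω,
      Real.exp (2 * ℓ x) * (lap w x + k^2 * w x)^2 / 2
        = (lap v x + q x * v x)^2 / 2 + (b x)^2 / 2
          + a x * ‖gradient v x‖^2 + 2 * hess ℓ x (gradient v x) (gradient v x)
          + (-(a x) * ‖gradient ℓ x‖^2 + 2 * hess ℓ x (gradient ℓ x) (gradient ℓ x)) * (v x)^2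
          - k^2 * a x * (v x)^2
          + dvg (fun y => b y • gradient v y + c y) x + R x :=
  carleman_identity_general hΩ ℓ w σ hℓ hw hσ k v a q b c R hv ha hq hb hc hR
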